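/- Let V be a vector space over ℂ and let d, δ : V → V be ℂ-linear maps with d ∘ d = 0, δ ∘ δ = 0 and d ∘ δ = −δ ∘ d, and suppose there exists a ℂ-linear automorphism J of V with d ∘ J = J ∘ δ and δ ∘ J = −J ∘ d. Since δ maps range(d) into itself, δ induces a linear map δ̄ on the quotient W := V/range(d) with δ̄ ∘ δ̄ = 0. Then the following are equivalent: (1) range(d ∘ δ) = range(d) ∩ ker(δ) and range(d ∘ δ) = ker(d) ∩ range(δ); (2) the projection p : V → W induces an isomorphism in cohomology from (ker δ)/range(δ) to (ker δ̄)/range(δ̄). -/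
import Mathlib


open LinearMap

variable {V : Type*} [AddCommGroup V] [Module ℂ V]

/-- The map `δ̄` induced by `δ` on the quotient `W = V / range d`; it is well defined
because `d ∘ δ = -(δ ∘ d)` implies `δ (range d) ⊆ range d`. -/
noncomputable def deltaBar (d δ : V →ₗ[ℂ] V) (hanti : d ∘ₗ δ = -(δ ∘ₗ d)) :
    (V ⧸ LinearMap.range d) →ₗ[ℂ] (V ⧸ LinearMap.range d) :=
  Submodule.mapQ _ _ δ (by
    rintro x ⟨y, rfl⟩
    have h1 : d (δ y) = -(δ (d y)) := by
      have := congrArg (fun f : V →ₗ[ℂ] V => f y) hanti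
      simpa using this
    refine Submodule.mem_comap.2 ⟨-(δ y), ?_⟩
    simp [h1])

/-- The map from `ker δ` to `ker δ̄` induced by the projection `V → V / range d`. -/
noncomputable def kerProj (d δ : V →ₗ[ℂ] V) (hanti : d ∘ₗ δ = -(δ ∘ₗ d)) :
    (LinearMap.ker δ : Submodule ℂ V) →ₗ[ℂ]
      (LinearMap.ker (deltaBar d δ hanti) : Submodule ℂ (V ⧸ LinearMap.range d)) :=
  LinearMap.codRestrict _
    ((LinearMap.range d).mkQ ∘ₗ (LinearMap.ker δ).subtype)
    (fun x => by
      have hx : δ (x : V) = 0 := x.2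
      simp only [LinearMap.mem_ker, LinearMap.comp_apply, Submodule.coe_subtype,
        Submodule.mkQ_apply]
      rw [deltaBar, Submodule.mapQ_apply, hx]
      simp)

/-- The map induced in cohomology by the projection `p : (V, δ) → (V / range d, δ̄)`,
from `(ker δ) / range δ` to `(ker δ̄) / range δ̄`. -/
noncomputable def cohProj (d δ : V →ₗ[ℂ] V) (hanti : d ∘ₗ δ = -(δ ∘ₗ d)) :
    ((LinearMap.ker δ : Submodule ℂ V) ⧸
        (LinearMap.range δ).comap (LinearMap.ker δ).subtype) →ₗ[ℂ]
      ((LinearMap.ker (deltaBar d δ hanti) : Submodule ℂ (V ⧸ LinearMap.range d)) ⧸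
        (LinearMap.range (deltaBar d δ hanti)).comap
          (LinearMap.ker (deltaBar d δ hanti)).subtype) :=
  Submodule.mapQ _ _ (kerProj d δ hanti) (by
    intro x hx
    simp only [Submodule.mem_comap, LinearMap.mem_range, Submodule.coe_subtype] at hx ⊢
    obtain ⟨y, hy⟩ := hx
    refine ⟨(LinearMap.range d).mkQ y, ?_⟩
    have : (kerProj d δ hanti x : V ⧸ LinearMap.range d) = (LinearMap.range d).mkQ (x : V) := rfl
    rw [this, deltaBar, Submodule.mkQ_apply, Submodule.mkQ_apply, Submodule.mapQ_apply, hy])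

/-- Theorem 4.2 of the paper (algebraic form): the basic `dd^𝒥`-lemma holds iff the
projection `p : (V, δ) → (V / range d, δ̄)` induces an isomorphism in cohomology. -/
theorem stmt5 {V : Type*} [AddCommGroup V] [Module ℂ V]
    (d δ : V →ₗ[ℂ] V)
    (hdd : d ∘ₗ d = 0)
    (hδδ : δ ∘ₗ δ = 0)
    (hanti : d ∘ₗ δ = -(δ ∘ₗ d))
    (hJ : ∃ J : V ≃ₗ[ℂ] V,
      d ∘ₗ (J : V →ₗ[ℂ] V) = (J : V →ₗ[ℂ] V) ∘ₗ δ ∧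
      δ ∘ₗ (J : V →ₗ[ℂ] V) = -((J : V →ₗ[ℂ] V) ∘ₗ d)) :
    (LinearMap.range (d ∘ₗ δ) = LinearMap.range d ⊓ LinearMap.ker δ ∧
      LinearMap.range (d ∘ₗ δ) = LinearMap.ker d ⊓ LinearMap.range δ) ↔
      Function.Bijective (cohProj d δ hanti) := by
  classical
  obtain ⟨J, hJ1, hJ2⟩ := hJ
  -- pointwise versions
  have hanti' : ∀ v, d (δ v) = -δ (d v) := fun v => by
    have := LinearMap.congr_fun hanti v; simpa using this
  have hdd' : ∀ v, d (d v) = 0 := fun v => by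
    have := LinearMap.congr_fun hdd v; simpa using this
  have hδδ' : ∀ v, δ (δ v) = 0 := fun v => by
    have := LinearMap.congr_fun hδδ v; simpa using this
  have hJ1' : ∀ v, d (J v) = J (δ v) := fun v => by
    have := LinearMap.congr_fun hJ1 v; simpa using this
  have hJ2' : ∀ v, δ (J v) = -J (d v) := fun v => by
    have := LinearMap.congr_fun hJ2 v; simpa using this
  have hdb : ∀ x : V, deltaBar d δ hanti (Submodule.Quotient.mk x) =
      Submodule.Quotient.mk (δ x) := fun x => by
    rw [deltaBar, Submodule.mapQ_apply]
  have hkp : ∀ x : LinearMap.ker δ,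
      ((kerProj d δ hanti x : V ⧸ LinearMap.range d)) = Submodule.Quotient.mk (x : V) := fun x => rfl
  have hcp : ∀ x : LinearMap.ker δ, cohProj d δ hanti (Submodule.Quotient.mk x) =
      Submodule.Quotient.mk (kerProj d δ hanti x) := fun x => by
    rw [cohProj, Submodule.mapQ_apply]
  constructor
  · rintro ⟨hL1, _hL2⟩
    constructor
    · -- injective
      rw [injective_iff_map_eq_zero]
      intro a ha
      obtain ⟨x, rfl⟩ := Submodule.Quotient.mk_surjective _ a
      rw [hcp, Submodule.Quotient.mk_eq_zero] at ha
      obtain ⟨q, hq⟩ := Submodule.mem_comap.1 ha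
      obtain ⟨y, rfl⟩ := Submodule.Quotient.mk_surjective _ q
      have hq' : (Submodule.Quotient.mk (δ y) : V ⧸ LinearMap.range d)
          = Submodule.Quotient.mk (x : V) := by
        rw [← hdb, hq, Submodule.subtype_apply, hkp]
      rw [Submodule.Quotient.eq] at hq'
      have hxδ0 : δ (x : V) = 0 := x.2
      have hmem : δ y - (x : V) ∈ LinearMap.range d ⊓ LinearMap.ker δ := by
        refine ⟨hq', ?_⟩
        show δ (δ y - (x : V)) = 0
        rw [map_sub, hδδ' y, hxδ0, sub_zero]
      rw [← hL1] at hmem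
      obtain ⟨w, hw⟩ := hmem
      rw [Submodule.Quotient.mk_eq_zero, Submodule.mem_comap]
      refine ⟨d w + y, ?_⟩
      have hneg : δ (d w) = -(d (δ w)) := by rw [hanti' w, neg_neg]
      have hw' : d (δ w) = δ y - (x : V) := by simpa using hw
      simp only [Submodule.subtype_apply, map_add, hneg, hw']
      abel
    · -- surjective
      intro b
      obtain ⟨q, rfl⟩ := Submodule.Quotient.mk_surjective _ b
      obtain ⟨u, hu⟩ := Submodule.Quotient.mk_surjective (LinearMap.range d) (q : V ⧸ LinearMap.range d)
      have hq0 : deltaBar d δ hanti (q : V ⧸ LinearMap.range d) = 0 := q.2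
      rw [← hu, hdb, Submodule.Quotient.mk_eq_zero] at hq0
      have hδu : δ u ∈ LinearMap.range (d ∘ₗ δ) := by
        rw [hL1]; exact ⟨hq0, hδδ' u⟩
      obtain ⟨w, hw⟩ := hδu
      have hw' : d (δ w) = δ u := by simpa using hw
      have hx : δ (u + d w) = 0 := by
        have : δ (d w) = -(d (δ w)) := by rw [hanti' w, neg_neg]
        rw [map_add, this, hw']; abel
      refine ⟨Submodule.Quotient.mk ⟨u + d w, LinearMap.mem_ker.2 hx⟩, ?_⟩
      rw [hcp]
      congr 1
      apply Subtype.ext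
      rw [hkp, ← hu]
      have : (Submodule.Quotient.mk (d w) : V ⧸ LinearMap.range d) = 0 :=
        (Submodule.Quotient.mk_eq_zero _).2 ⟨w, rfl⟩
      calc (Submodule.Quotient.mk (u + d w) : V ⧸ LinearMap.range d)
          = Submodule.Quotient.mk u + Submodule.Quotient.mk (d w) := by
            rw [← Submodule.Quotient.mk_add]
        _ = Submodule.Quotient.mk u := by rw [this, add_zero]
  · rintro ⟨hinj, hsurj⟩
    -- I1 : range d ∩ ker δ ⊆ range δ
    have I1 : ∀ x : V, x ∈ LinearMap.range d → δ x = 0 → x ∈ LinearMap.range δ := by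
      intro x hxd hxδ
      set x' : LinearMap.ker δ := ⟨x, LinearMap.mem_ker.2 hxδ⟩
      have h0 : kerProj d δ hanti x' = 0 := by
        apply Subtype.ext
        rw [hkp]
        simpa using (Submodule.Quotient.mk_eq_zero _).2 hxd
      have : cohProj d δ hanti (Submodule.Quotient.mk x') = 0 := by
        rw [hcp, h0]; simp
      have hz : (Submodule.Quotient.mk x' : _ ⧸ (LinearMap.range δ).comap (LinearMap.ker δ).subtype) = 0 := by
        apply hinj
        simpa using this
      rw [Submodule.Quotient.mk_eq_zero, Submodule.mem_comap] at hz
      exact hz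
    -- S : range d ∩ range δ ⊆ range (d ∘ₗ δ)
    have S : ∀ u : V, δ u ∈ LinearMap.range d → δ u ∈ LinearMap.range (d ∘ₗ δ) := by
      intro u hud
      have hqk : deltaBar d δ hanti (Submodule.Quotient.mk u) = 0 := by
        rw [hdb, Submodule.Quotient.mk_eq_zero]; exact hud
      set q : LinearMap.ker (deltaBar d δ hanti) :=
        ⟨Submodule.Quotient.mk u, LinearMap.mem_ker.2 hqk⟩
      obtain ⟨a, ha⟩ := hsurj (Submodule.Quotient.mk q)
      obtain ⟨x', rfl⟩ := Submodule.Quotient.mk_surjective _ a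
      rw [hcp] at ha
      rw [Submodule.Quotient.eq] at ha
      obtain ⟨r, hr⟩ := Submodule.mem_comap.1 ha
      obtain ⟨s, rfl⟩ := Submodule.Quotient.mk_surjective _ r
      have hr' : (Submodule.Quotient.mk (δ s) : V ⧸ LinearMap.range d)
          = Submodule.Quotient.mk ((x' : V) - u) := by
        rw [← hdb, hr, Submodule.subtype_apply]
        push_cast
        rw [hkp, Submodule.Quotient.mk_sub]
      rw [Submodule.Quotient.eq] at hr'
      obtain ⟨t, ht⟩ := hr'
      -- δ s - (x' - u) = d t, so u = x' - δ s + d t ... careful with signs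
      have hu : u = (x' : V) - δ s + d t := by rw [ht]; abel
      have hδx' : δ (x' : V) = 0 := x'.2
      have hfin : δ u = d (δ (-t)) := by
        rw [hu, map_add, map_sub, hδx', hδδ' s]
        have hneg : δ (d t) = -(d (δ t)) := by rw [hanti' t, neg_neg]
        rw [hneg]
        simp only [map_neg]
        abel
      exact ⟨-t, by simpa using hfin.symm⟩
    -- trivial inclusions
    have sub1 : LinearMap.range (d ∘ₗ δ) ≤ LinearMap.range d ⊓ LinearMap.ker δ := by
      rintro _ ⟨w, rfl⟩
      refine ⟨⟨δ w, rfl⟩, ?_⟩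
      show δ ((d ∘ₗ δ) w) = 0
      have hneg : δ (d (δ w)) = -(d (δ (δ w))) := by rw [hanti' (δ w), neg_neg]
      simp only [LinearMap.comp_apply, hneg, hδδ' w]
      simp
    have hL1 : LinearMap.range (d ∘ₗ δ) = LinearMap.range d ⊓ LinearMap.ker δ := by
      refine le_antisymm sub1 ?_
      rintro x ⟨hxd, hxδ⟩
      obtain ⟨u, hu⟩ := I1 x hxd hxδ
      rw [← hu] at hxd ⊢
      exact S u hxd
    refine ⟨hL1, ?_⟩
    -- second equality via J
    refine le_antisymm ?_ ?_
    · rintro _ ⟨w, rfl⟩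
      refine ⟨?_, ?_⟩
      · show d ((d ∘ₗ δ) w) = 0
        simp only [LinearMap.comp_apply, hdd' (δ w)]
      · refine ⟨-(d w), ?_⟩
        show δ (-(d w)) = (d ∘ₗ δ) w
        simp only [map_neg, LinearMap.comp_apply]
        rw [hanti' w]
    · rintro x ⟨hxd, ⟨y, hy⟩⟩
      have hxd' : d x = 0 := hxd
      have h1 : J x ∈ LinearMap.range d := ⟨J y, by rw [hJ1' y, hy]⟩
      have h2 : δ (J x) = 0 := by rw [hJ2' x, hxd']; simp
      have h3 : J x ∈ LinearMap.range (d ∘ₗ δ) := by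
        rw [hL1]; exact ⟨h1, h2⟩
      obtain ⟨w, hw⟩ := h3
      -- J x = d (δ w); and d δ (J v) = J (d δ v)
      have hcomm : ∀ v : V, d (δ (J v)) = J (d (δ v)) := by
        intro v
        rw [hJ2' v, map_neg, hJ1' (d v), hanti' v]
        simp
      refine ⟨J.symm w, ?_⟩
      show d (δ (J.symm w)) = x
      have hc := hcomm (J.symm w)
      rw [J.apply_symm_apply] at hc
      have hw' : d (δ w) = J x := by simpa using hw
      apply J.injective
      rw [← hc, hw']
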